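/- Let V be a complex vector space of even dimension 2k, let w ∈ Λ²V be of full rank 2k, and let φ: V → W be a linear map into another vector space W such that the induced map Λ²φ: Λ²V → Λ²W sends w to 0. Then rank φ ≤ k. -/

import Mathlib

open ExteriorAlgebra

/-- `w` lies in `Λ²U` for a subspace `U ⊆ V`. -/
def memLambdaTwo {V : Type*} [AddCommGroup V] [Module ℂ V]
    (w : ExteriorAlgebra ℂ V) (U : Submodule ℂ V) : Prop :=
  w ∈ Submodule.map (ExteriorAlgebra.map U.subtype).toLinearMap (⋀[ℂ]^2 (↥U))

section Aux

variable {V : Type*} [AddCommGroup V] [Module ℂ V]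

lemma aux_ring {A : Type*} [Ring A] {x1 x2 y1 y2 : A} (h : x2 * y1 + y1 * x2 = 0) :
    (x1 + x2) * (y1 + y2) = x1 * (y1 + y2) + y1 * -x2 + x2 * y2 := by
  have h' : x2 * y1 = -(y1 * x2) := eq_neg_of_add_eq_zero_left h
  rw [add_mul, mul_add x2, h', mul_neg]
  abel

lemma aux_exists_rep {w : ExteriorAlgebra ℂ V} (hw : w ∈ ⋀[ℂ]^2 V) :
    ∃ (n : ℕ) (a b : Fin n → V), w = ∑ i, ι ℂ (a i) * ι ℂ (b i) := by
  rw [exteriorPower, pow_two] at hw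
  refine Submodule.mul_induction_on hw ?_ ?_
  · rintro m ⟨x, rfl⟩ n' ⟨y, rfl⟩
    exact ⟨1, fun _ => x, fun _ => y, by simp⟩
  · rintro x y ⟨n₁, a₁, b₁, rfl⟩ ⟨n₂, a₂, b₂, rfl⟩
    refine ⟨n₁ + n₂, Fin.append a₁ a₂, Fin.append b₁ b₂, ?_⟩
    rw [Fin.sum_univ_add]
    simp [Fin.append_left, Fin.append_right]

lemma aux_memLambdaTwo (U : Submodule ℂ V) {n : ℕ} (a b : Fin n → U) :
    memLambdaTwo (∑ i, ι ℂ ((a i : V)) * ι ℂ ((b i : V))) U := by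
  refine ⟨∑ i, ι ℂ (a i) * ι ℂ (b i), Submodule.sum_mem _ fun i _ => ?_, ?_⟩
  · rw [exteriorPower, pow_two]
    exact Submodule.mul_mem_mul ⟨a i, rfl⟩ ⟨b i, rfl⟩
  · simp [map_sum, map_apply_ι]

end Aux

set_option maxHeartbeats 1000000 in
theorem rank_le_half_of_kills_full_rank_form
    (V W : Type*) [AddCommGroup V] [Module ℂ V] [FiniteDimensional ℂ V]
    [AddCommGroup W] [Module ℂ W] [FiniteDimensional ℂ W]
    (k : ℕ) (hdim : Module.finrank ℂ V = 2 * k)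
    (w : ExteriorAlgebra ℂ V) (hw : w ∈ ⋀[ℂ]^2 V)
    (hfull : ∀ U : Submodule ℂ V, memLambdaTwo w U → U = ⊤)
    (φ : V →ₗ[ℂ] W) (hkill : ExteriorAlgebra.map φ w = 0) :
    Module.finrank ℂ (↥(LinearMap.range φ)) ≤ k := by
  classical
  obtain ⟨n, a, b, hrep⟩ := aux_exists_rep hw
  set K := LinearMap.ker φ with hKdef
  obtain ⟨C, hC⟩ := Submodule.exists_isCompl K
  set πK : V →ₗ[ℂ] K := K.linearProjOfIsCompl C hC with hπK
  set πC : V →ₗ[ℂ] C := C.linearProjOfIsCompl K hC.symm with hπC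
  have hsplit : ∀ v : V, ((πK v : V)) + ((πC v : V)) = v := fun v =>
    Submodule.projection_add_projection_eq_self hC v
  have hφK : ∀ x : K, φ (x : V) = 0 := fun x => x.2
  have hφq : ∀ v : V, φ ((πC v : V)) = φ v := by
    intro v
    conv_rhs => rw [← hsplit v]
    rw [map_add, hφK, zero_add]
  -- the ψ map C → W is injective
  set ψ : ↥C →ₗ[ℂ] W := φ ∘ₗ C.subtype with hψ
  have hψker : LinearMap.ker ψ = ⊥ := by
    rw [eq_bot_iff]
    rintro x hx
    have hxK : (x : V) ∈ K := by
      simpa [hψ, hKdef, LinearMap.mem_ker] using hx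
    have : (x : V) ∈ K ⊓ C := ⟨hxK, x.2⟩
    rw [disjoint_iff.mp hC.disjoint] at this
    simpa [Submodule.mem_bot] using Subtype.ext (by simpa using this)
  -- pure C part vanishes
  set c' : ExteriorAlgebra ℂ ↥C := ∑ i, ι ℂ (πC (a i)) * ι ℂ (πC (b i)) with hc'
  have hmapc' : ExteriorAlgebra.map ψ c' = 0 := by
    have h1 : ExteriorAlgebra.map ψ c' = ExteriorAlgebra.map φ w := by
      rw [hrep, hc', map_sum, map_sum]
      refine Finset.sum_congr rfl fun i _ => ?_
      rw [map_mul, map_mul, map_apply_ι, map_apply_ι, map_apply_ι, map_apply_ι]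
      simp only [hψ, LinearMap.comp_apply, Submodule.subtype_apply, hφq]
    rw [h1, hkill]
  have hc'0 : c' = 0 :=
    ExteriorAlgebra.map_injective_field hψker (by rw [hmapc', map_zero])
  have hc : ∑ i, ι ℂ ((πC (a i) : V)) * ι ℂ ((πC (b i) : V)) = (0 : ExteriorAlgebra ℂ V) := by
    have := congrArg (ExteriorAlgebra.map C.subtype) hc'0
    simpa [hc', map_sum, map_apply_ι] using this
  -- rewrite w with at least one ker vector per term
  have key : ∀ av bv : V, ι ℂ av * ι ℂ bv
      = ι ℂ ((πK av : V)) * ι ℂ bv + ι ℂ ((πK bv : V)) * ι ℂ (-((πC av : V)))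
        + ι ℂ ((πC av : V)) * ι ℂ ((πC bv : V)) := by
    intro av bv
    set pa := ((πK av : V)) with hpa
    set qa := ((πC av : V)) with hqa
    set pb := ((πK bv : V)) with hpb
    set qb := ((πC bv : V)) with hqb
    have hA : ι ℂ av = ι ℂ pa + ι ℂ qa := by rw [← map_add, hsplit av]
    have hB : ι ℂ bv = ι ℂ pb + ι ℂ qb := by rw [← map_add, hsplit bv]
    rw [hA, hB, map_neg, aux_ring (ι_add_mul_swap qa pb)]
  have hw2 : w = ∑ i, (ι ℂ ((πK (a i) : V)) * ι ℂ (b i)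
      + ι ℂ ((πK (b i) : V)) * ι ℂ (-((πC (a i) : V)))) := by
    calc w = ∑ i, (ι ℂ ((πK (a i) : V)) * ι ℂ (b i)
          + ι ℂ ((πK (b i) : V)) * ι ℂ (-((πC (a i) : V)))
          + ι ℂ ((πC (a i) : V)) * ι ℂ ((πC (b i) : V))) := by
            rw [hrep]; exact Finset.sum_congr rfl fun i _ => key _ _
      _ = ∑ i, (ι ℂ ((πK (a i) : V)) * ι ℂ (b i)
          + ι ℂ ((πK (b i) : V)) * ι ℂ (-((πC (a i) : V))))
          + ∑ i, ι ℂ ((πC (a i) : V)) * ι ℂ ((πC (b i) : V)) := by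
            rw [← Finset.sum_add_distrib]
      _ = _ := by rw [hc, add_zero]
  -- single family indexed by Fin n ⊕ Fin n
  set kv : Fin n ⊕ Fin n → K := Sum.elim (fun i => πK (a i)) (fun i => πK (b i)) with hkv
  set yv : Fin n ⊕ Fin n → V := Sum.elim b (fun i => -((πC (a i) : V))) with hyv
  have hw3 : w = ∑ t : Fin n ⊕ Fin n, ι ℂ ((kv t : V)) * ι ℂ (yv t) := by
    rw [hw2, Fintype.sum_sum_type, ← Finset.sum_add_distrib]
    simp [hkv, hyv]
  -- basis of K
  set m := Module.finrank ℂ K with hm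
  set e : Module.Basis (Fin m) ℂ K := Module.finBasis ℂ K with he
  set x : Fin m → V := fun j => ∑ t, e.repr (kv t) j • yv t with hx
  have hcoe : ∀ t, ι ℂ ((kv t : V)) = ∑ j, e.repr (kv t) j • ι ℂ ((e j : V)) := by
    intro t
    conv_lhs => rw [← Module.Basis.sum_repr e (kv t)]
    simp [map_sum, map_smul, -Module.Basis.sum_repr]
  have hw4 : w = ∑ j, ι ℂ ((e j : V)) * ι ℂ (x j) := by
    rw [hw3]
    calc ∑ t, ι ℂ ((kv t : V)) * ι ℂ (yv t)
        = ∑ t, ∑ j, e.repr (kv t) j • (ι ℂ ((e j : V)) * ι ℂ (yv t)) := by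
          refine Finset.sum_congr rfl fun t _ => ?_
          rw [hcoe t, Finset.sum_mul]
          simp [smul_mul_assoc]
      _ = ∑ j, ∑ t, e.repr (kv t) j • (ι ℂ ((e j : V)) * ι ℂ (yv t)) := Finset.sum_comm
      _ = ∑ j, ι ℂ ((e j : V)) * ι ℂ (x j) := by
          refine Finset.sum_congr rfl fun j _ => ?_
          rw [hx]
          simp [map_sum, map_smul, mul_add, Finset.mul_sum, mul_smul_comm]
  -- the small subspace
  set U : Submodule ℂ V := K ⊔ Submodule.span ℂ (Set.range x) with hU
  have heU : ∀ j, ((e j : V)) ∈ U := fun j => Submodule.mem_sup_left (e j).2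
  have hxU : ∀ j, x j ∈ U := fun j =>
    Submodule.mem_sup_right (Submodule.subset_span ⟨j, rfl⟩)
  have hmem : memLambdaTwo w U := by
    rw [hw4]
    exact aux_memLambdaTwo U (fun j => ⟨(e j : V), heU j⟩) (fun j => ⟨x j, hxU j⟩)
  have hUtop : U = ⊤ := hfull U hmem
  have h1 : Module.finrank ℂ U = 2 * k := by
    rw [hUtop, finrank_top, hdim]
  have h2 : Module.finrank ℂ U ≤ m + m := by
    refine (Submodule.finrank_add_le_finrank_add_finrank K _).trans ?_
    refine Nat.add_le_add le_rfl ?_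
    exact (finrank_range_le_card x).trans_eq (Fintype.card_fin m)
  have h3 : Module.finrank ℂ (LinearMap.range φ) + m = 2 * k := by
    rw [hm, hKdef, ← hdim]
    exact LinearMap.finrank_range_add_finrank_ker φ
  omega
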